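/- arXiv:2211.06767 — 6 statements merged into one kernel-verified Lean document; each statement's English description precedes it below -/
import Mathlib

section
/- Let V : [0,L] → ℝ be twice continuously differentiable and satisfy λ²·V''(s) = V(s) + b·g(V(s)) for all s ∈ [0,L]. If V(0) ≥ 0 and V(L) ≥ 0, then V(s) ≥ 0 for all s ∈ [0,L]. -/
open Set

/-- Maximum-principle property of the cable equilibrium equation
`λ² V''(s) = V(s) + b·max(V(s), 0)` on `[0, L]`: if the boundary values are
nonnegative, then `V` is nonnegative throughout `[0, L]`. -/
theorem cable_equilibrium_nonneg_of_boundary_nonneg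
    (lam L b : ℝ) (hlam : 0 < lam) (hL : 0 < L) (hb : 0 ≤ b)
    (V V' V'' : ℝ → ℝ)
    (hV : ∀ s ∈ Icc 0 L, HasDerivWithinAt V (V' s) (Icc 0 L) s)
    (hV' : ∀ s ∈ Icc 0 L, HasDerivWithinAt V' (V'' s) (Icc 0 L) s)
    (hV''cont : ContinuousOn V'' (Icc 0 L))
    (hODE : ∀ s ∈ Icc 0 L, lam ^ 2 * V'' s = V s + b * max (V s) 0)
    (h0 : 0 ≤ V 0) (hLval : 0 ≤ V L) :
    ∀ s ∈ Icc 0 L, 0 ≤ V s := by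
  by_contra hcon
  push_neg at hcon
  obtain ⟨t, ht, htneg⟩ := hcon
  have hVcont : ContinuousOn V (Icc 0 L) :=
    fun s hs => (hV s hs).continuousWithinAt
  obtain ⟨s₀, hs₀mem, hmin⟩ :=
    (isCompact_Icc).exists_isMinOn (nonempty_Icc.2 hL.le) hVcont
  have hs₀neg : V s₀ < 0 := lt_of_le_of_lt (hmin ht) htneg
  have hs₀0 : s₀ ≠ 0 := fun h => absurd (h ▸ hs₀neg) (not_lt.2 h0)
  have hs₀L : s₀ ≠ L := fun h => absurd (h ▸ hs₀neg) (not_lt.2 hLval)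
  have hs₀ : s₀ ∈ Ioo (0:ℝ) L :=
    ⟨lt_of_le_of_ne hs₀mem.1 (Ne.symm hs₀0), lt_of_le_of_ne hs₀mem.2 hs₀L⟩
  have hIccnhds : Icc (0:ℝ) L ∈ nhds s₀ := Icc_mem_nhds hs₀.1 hs₀.2
  -- V'' s₀ < 0
  have hmax : max (V s₀) 0 = 0 := max_eq_right hs₀neg.le
  have hV''s₀ : V'' s₀ < 0 := by
    have h := hODE s₀ hs₀mem
    rw [hmax, mul_zero, add_zero] at h
    nlinarith [sq_nonneg lam, hs₀neg]
  -- V' s₀ = 0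
  have hVat : HasDerivAt V (V' s₀) s₀ := (hV s₀ hs₀mem).hasDerivAt hIccnhds
  have hV's₀ : V' s₀ = 0 := by
    have hlmin : IsLocalMin V s₀ := hmin.isLocalMin hIccnhds
    have := hlmin.deriv_eq_zero
    rwa [hVat.deriv] at this
  -- V'' < 0 near s₀
  have hev : ∀ᶠ y in nhds s₀, V'' y < 0 := by
    have : ContinuousWithinAt V'' (Icc 0 L) s₀ := hV''cont s₀ hs₀mem
    have h2 : ContinuousAt V'' s₀ := this.continuousAt hIccnhds
    exact h2.eventually_lt continuousAt_const hV''s₀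
  obtain ⟨ε, hε, hball⟩ := Metric.eventually_nhds_iff.1 hev
  set a : ℝ := max (s₀ - ε / 2) (s₀ / 2) with ha
  have ha0 : 0 ≤ a := le_trans (by linarith [hs₀.1]) (le_max_right _ _)
  have has₀ : a < s₀ := max_lt (by linarith) (by linarith [hs₀.1])
  have hsub : Icc a s₀ ⊆ Icc 0 L := Icc_subset_Icc ha0 hs₀mem.2
  have hballmem : ∀ x ∈ Icc a s₀, V'' x < 0 := by
    intro x hx
    apply hball
    rw [Real.dist_eq, abs_lt]
    constructor
    · have : s₀ - ε / 2 ≤ a := le_max_left _ _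
      have := hx.1
      linarith
    · have := hx.2; linarith
  have hintsub : Ioo a s₀ ⊆ Icc 0 L := fun x hx => ⟨le_trans ha0 hx.1.le,
    le_trans hx.2.le hs₀mem.2⟩
  -- V' strictly antitone on [a, s₀]
  have hanti : StrictAntiOn V' (Icc a s₀) := by
    apply strictAntiOn_of_deriv_neg (convex_Icc a s₀)
    · exact fun x hx => ((hV' x (hsub hx)).continuousWithinAt).mono hsub
    · intro x hx
      rw [interior_Icc] at hx
      have hmem : Icc (0:ℝ) L ∈ nhds x :=
        Icc_mem_nhds (lt_of_le_of_lt ha0 hx.1) (lt_of_lt_of_le hx.2 hs₀mem.2)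
      have := ((hV' x (hintsub hx)).hasDerivAt hmem).deriv
      rw [this]
      exact hballmem x ⟨hx.1.le, hx.2.le⟩
  -- V strictly monotone on [a, s₀]
  have hmono : StrictMonoOn V (Icc a s₀) := by
    apply strictMonoOn_of_deriv_pos (convex_Icc a s₀)
    · exact fun x hx => (hVcont x (hsub hx)).mono hsub
    · intro x hx
      rw [interior_Icc] at hx
      have hmem : Icc (0:ℝ) L ∈ nhds x :=
        Icc_mem_nhds (lt_of_le_of_lt ha0 hx.1) (lt_of_lt_of_le hx.2 hs₀mem.2)
      have hd := ((hV x (hintsub hx)).hasDerivAt hmem).deriv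
      rw [hd]
      have := hanti ⟨hx.1.le, hx.2.le⟩ (right_mem_Icc.2 has₀.le) hx.2
      rwa [hV's₀] at this
  have : V a < V s₀ :=
    hmono (left_mem_Icc.2 has₀.le) (right_mem_Icc.2 has₀.le) has₀
  exact absurd (hmin (hsub (left_mem_Icc.2 has₀.le))) (not_le.2 this)
end

section
/- (Lemma 1(a)) Let V : [0,L] → ℝ be twice continuously differentiable, satisfy λ²·V''(s) = V(s) + b·g(V(s)) for all s ∈ [0,L], with boundary values V(0) = V₀ and V(L) = V_L satisfying V₀·V_L ≥ 0. Then there exist constants c₁, c₂ ∈ ℝ and λ̂ > 0 such that V(s) = c₁·exp(s/λ̂) + c₂·exp(−s/λ̂) for all s ∈ [0,L]. Specifically, if V₀ ≥ 0 and V_L ≥ 0 one may take λ̂ = λ/√(1+b), and if V₀ ≤ 0 and V_L ≤ 0 one may take λ̂ = λ. -/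
/-!
Where `V < 0` the equation reads `λ² V'' = V < 0`, and where `V > 0` it reads
`λ² V'' = (1 + b) V > 0`. If `V 0, V L ≥ 0`, then on a maximal subinterval where `V < 0` the
function is concave with nonnegative values at the ends, hence nonnegative: a contradiction, so
`V ≥ 0` on `[0, L]`; symmetrically for `-V`. The equation thus becomes `λ̂² V'' = V` with
`λ̂ = λ / √(1 + b)` or `λ̂ = λ`, for which `V' + V/λ̂` and `V' - V/λ̂` satisfy first-order linear
equations and so are multiples of `exp (s/λ̂)` and `exp (-s/λ̂)`.
-/

open Set

section LinearODE

variable {a b : ℝ}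

theorem exists_eq_mul_exp_of_hasDerivWithinAt {u : ℝ → ℝ} {α : ℝ}
    (hu : ∀ s ∈ Icc a b, HasDerivWithinAt u (α * u s) (Icc a b) s) :
    ∃ c : ℝ, ∀ s ∈ Icc a b, u s = c * Real.exp (α * s) := by
  have hderiv : ∀ s ∈ Icc a b,
      HasDerivWithinAt (fun t ↦ u t * Real.exp (-(α * t))) 0 (Icc a b) s := by
    intro s hs
    have hexp : HasDerivAt (fun t ↦ Real.exp (-(α * t))) (Real.exp (-(α * s)) * -α) s := by
      simpa using ((hasDerivAt_id s).const_mul α).neg.exp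
    exact ((hu s hs).mul hexp.hasDerivWithinAt).congr_deriv (by ring)
  have hconst := constant_of_has_deriv_right_zero
    (fun s hs ↦ (hderiv s hs).continuousWithinAt)
    (fun s hs ↦ (hderiv s (Ico_subset_Icc_self hs)).mono_of_mem_nhdsWithin
      (Filter.mem_of_superset (Icc_mem_nhdsGE hs.2) (Icc_subset_Icc_left hs.1)))
  refine ⟨u a * Real.exp (-(α * a)), fun s hs ↦ ?_⟩
  rw [← hconst s hs, mul_assoc, ← Real.exp_add, neg_add_cancel, Real.exp_zero, mul_one]

theorem exists_eq_exp_add_exp_of_sq_mul_deriv2_eq {V V' V'' : ℝ → ℝ} {μ : ℝ} (hμ : μ ≠ 0)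
    (hV : ∀ s ∈ Icc a b, HasDerivWithinAt V (V' s) (Icc a b) s)
    (hV' : ∀ s ∈ Icc a b, HasDerivWithinAt V' (V'' s) (Icc a b) s)
    (hODE : ∀ s ∈ Icc a b, μ ^ 2 * V'' s = V s) :
    ∃ c₁ c₂ : ℝ, ∀ s ∈ Icc a b,
      V s = c₁ * Real.exp (s / μ) + c₂ * Real.exp (-(s / μ)) := by
  have hV'' : ∀ s ∈ Icc a b, V'' s = V s / μ ^ 2 := fun s hs ↦ by
    rw [← hODE s hs]; field_simp
  obtain ⟨p, hp⟩ := exists_eq_mul_exp_of_hasDerivWithinAt (u := fun s ↦ V' s + V s / μ)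
    (α := 1 / μ) fun s hs ↦ by
      refine ((hV' s hs).add ((hV s hs).div_const μ)).congr_deriv ?_
      rw [hV'' s hs]; field_simp; ring
  obtain ⟨q, hq⟩ := exists_eq_mul_exp_of_hasDerivWithinAt (u := fun s ↦ V' s - V s / μ)
    (α := -(1 / μ)) fun s hs ↦ by
      refine ((hV' s hs).sub ((hV s hs).div_const μ)).congr_deriv ?_
      rw [hV'' s hs]; field_simp; ring
  refine ⟨μ * p / 2, -(μ * q / 2), fun s hs ↦ ?_⟩
  have hps := hp s hs
  have hqs := hq s hs
  simp only [neg_mul, one_div_mul_eq_div] at hps hqs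
  field_simp at hps hqs
  linear_combination (1 / 2) * (hps - hqs)

end LinearODE

section MaximumPrinciple

variable {a b : ℝ} {V : ℝ → ℝ}

theorem exists_Ioo_neg_of_nonneg_endpoints (hV : ContinuousOn V (Icc a b))
    (ha : 0 ≤ V a) (hb : 0 ≤ V b) {s : ℝ} (hs : s ∈ Icc a b) (hVs : V s < 0) :
    ∃ l r, s ∈ Ioo l r ∧ Icc l r ⊆ Icc a b ∧ 0 ≤ V l ∧ 0 ≤ V r ∧ ∀ t ∈ Ioo l r, V t < 0 := by
  have hleft : IsCompact (Icc a s ∩ V ⁻¹' Ici 0) :=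
    isCompact_Icc.of_isClosed_subset ((hV.mono (Icc_subset_Icc_right hs.2))
      |>.preimage_isClosed_of_isClosed isClosed_Icc isClosed_Ici) inter_subset_left
  have hright : IsCompact (Icc s b ∩ V ⁻¹' Ici 0) :=
    isCompact_Icc.of_isClosed_subset ((hV.mono (Icc_subset_Icc_left hs.1))
      |>.preimage_isClosed_of_isClosed isClosed_Icc isClosed_Ici) inter_subset_left
  obtain ⟨l, ⟨⟨hal, hls⟩, hVl⟩, hl_max⟩ := hleft.exists_isGreatest ⟨a, ⟨le_rfl, hs.1⟩, ha⟩
  obtain ⟨r, ⟨⟨hsr, hrb⟩, hVr⟩, hr_min⟩ := hright.exists_isLeast ⟨b, ⟨hs.2, le_rfl⟩, hb⟩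
  have hls' : l < s := hls.lt_of_ne fun h ↦ by rw [h] at hVl; exact hVs.not_ge hVl
  have hsr' : s < r := hsr.lt_of_ne fun h ↦ by rw [← h] at hVr; exact hVs.not_ge hVr
  refine ⟨l, r, ⟨hls', hsr'⟩, Icc_subset_Icc hal hrb, hVl, hVr, fun t ht ↦ ?_⟩
  by_contra! hVt
  rcases le_total t s with hts | hst
  · exact ht.1.not_ge (hl_max ⟨⟨hal.trans ht.1.le, hts⟩, hVt⟩)
  · exact ht.2.not_ge (hr_min ⟨⟨hst, ht.2.le.trans hrb⟩, hVt⟩)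

theorem nonneg_of_deriv2_nonpos_of_neg {V' V'' : ℝ → ℝ}
    (hV : ∀ s ∈ Icc a b, HasDerivWithinAt V (V' s) (Icc a b) s)
    (hV' : ∀ s ∈ Icc a b, HasDerivWithinAt V' (V'' s) (Icc a b) s)
    (hconc : ∀ s ∈ Icc a b, V s < 0 → V'' s ≤ 0) (ha : 0 ≤ V a) (hb : 0 ≤ V b) :
    ∀ s ∈ Icc a b, 0 ≤ V s := by
  by_contra! ⟨s, hs, hVs⟩
  have hcont : ContinuousOn V (Icc a b) := fun t ht ↦ (hV t ht).continuousWithinAt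
  obtain ⟨l, r, hslr, hlr, hVl, hVr, hneg⟩ :=
    exists_Ioo_neg_of_nonneg_endpoints hcont ha hb hs hVs
  have hIoo : Ioo l r ⊆ Icc a b := Ioo_subset_Icc_self.trans hlr
  have hconcave : ConcaveOn ℝ (Icc l r) V := by
    refine concaveOn_of_hasDerivWithinAt2_nonpos (f' := V') (f'' := V'') (convex_Icc l r)
      (hcont.mono hlr) ?_ ?_ ?_ <;> rw [interior_Icc]
    · exact fun t ht ↦ (hV t (hIoo ht)).mono hIoo
    · exact fun t ht ↦ (hV' t (hIoo ht)).mono hIoo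
    · exact fun t ht ↦ hconc t (hIoo ht) (hneg t ht)
  have hlr' : l ≤ r := (hslr.1.trans hslr.2).le
  have hseg : s ∈ segment ℝ l r := by
    rw [segment_eq_Icc hlr']; exact Ioo_subset_Icc_self hslr
  have := hconcave.ge_on_segment (left_mem_Icc.2 hlr') (right_mem_Icc.2 hlr') hseg
  exact hVs.not_ge ((le_min hVl hVr).trans this)

end MaximumPrinciple

section Cable

variable {lam b L : ℝ} {V V' V'' : ℝ → ℝ}

theorem cable_eq_exp_of_boundary_nonneg (hlam : lam ≠ 0) (hb : 0 < 1 + b)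
    (hV : ∀ s ∈ Icc 0 L, HasDerivWithinAt V (V' s) (Icc 0 L) s)
    (hV' : ∀ s ∈ Icc 0 L, HasDerivWithinAt V' (V'' s) (Icc 0 L) s)
    (hODE : ∀ s ∈ Icc 0 L, lam ^ 2 * V'' s = V s + b * max (V s) 0)
    (h0 : 0 ≤ V 0) (hL : 0 ≤ V L) :
    ∃ c₁ c₂ : ℝ, ∀ s ∈ Icc 0 L,
      V s = c₁ * Real.exp (s / (lam / Real.sqrt (1 + b))) +
        c₂ * Real.exp (-(s / (lam / Real.sqrt (1 + b)))) := by
  have hnonneg : ∀ s ∈ Icc 0 L, 0 ≤ V s := by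
    refine nonneg_of_deriv2_nonpos_of_neg hV hV' (fun s hs hVs ↦ ?_) h0 hL
    have h := hODE s hs
    rw [max_eq_right hVs.le, mul_zero, add_zero] at h
    exact nonpos_of_mul_nonpos_right (h ▸ hVs.le) (by positivity)
  have hsqrt : Real.sqrt (1 + b) ^ 2 = 1 + b := Real.sq_sqrt hb.le
  refine exists_eq_exp_add_exp_of_sq_mul_deriv2_eq
    (div_ne_zero hlam (Real.sqrt_pos.2 hb).ne') hV hV' fun s hs ↦ ?_
  have h := hODE s hs
  rw [max_eq_left (hnonneg s hs)] at h
  rw [div_pow, hsqrt, div_mul_eq_mul_div, h]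
  field_simp

theorem cable_eq_exp_of_boundary_nonpos (hlam : lam ≠ 0) (hb : 0 ≤ 1 + b)
    (hV : ∀ s ∈ Icc 0 L, HasDerivWithinAt V (V' s) (Icc 0 L) s)
    (hV' : ∀ s ∈ Icc 0 L, HasDerivWithinAt V' (V'' s) (Icc 0 L) s)
    (hODE : ∀ s ∈ Icc 0 L, lam ^ 2 * V'' s = V s + b * max (V s) 0)
    (h0 : V 0 ≤ 0) (hL : V L ≤ 0) :
    ∃ c₁ c₂ : ℝ, ∀ s ∈ Icc 0 L,
      V s = c₁ * Real.exp (s / lam) + c₂ * Real.exp (-(s / lam)) := by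
  have hconc : ∀ s ∈ Icc 0 L, -V s < 0 → -V'' s ≤ 0 := fun s hs hVs ↦ by
    have h := hODE s hs
    rw [max_eq_left (neg_neg_iff_pos.1 hVs).le] at h
    have hV''s : 0 ≤ lam ^ 2 * V'' s := by rw [h]; nlinarith
    exact neg_nonpos.2 (nonneg_of_mul_nonneg_right hV''s (by positivity))
  have hnonpos : ∀ s ∈ Icc 0 L, V s ≤ 0 := fun s hs ↦ neg_nonneg.1 <|
    nonneg_of_deriv2_nonpos_of_neg (V := fun s ↦ -V s) (fun s hs ↦ (hV s hs).neg)
      (fun s hs ↦ (hV' s hs).neg) hconc (neg_nonneg.2 h0) (neg_nonneg.2 hL) s hs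
  refine exists_eq_exp_add_exp_of_sq_mul_deriv2_eq hlam hV hV' fun s hs ↦ ?_
  rw [hODE s hs, max_eq_right (hnonpos s hs), mul_zero, add_zero]

end Cable

theorem cable_equilibrium_same_sign_boundary_general
    (lam L b : ℝ) (hlam : 0 < lam) (hb : 0 ≤ b)
    (V V' V'' : ℝ → ℝ)
    (hV : ∀ s ∈ Icc 0 L, HasDerivWithinAt V (V' s) (Icc 0 L) s)
    (hV' : ∀ s ∈ Icc 0 L, HasDerivWithinAt V' (V'' s) (Icc 0 L) s)
    (hODE : ∀ s ∈ Icc 0 L, lam ^ 2 * V'' s = V s + b * max (V s) 0)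
    (V₀ VL : ℝ) (hbc0 : V 0 = V₀) (hbcL : V L = VL)
    (hsign : V₀ * VL ≥ 0) :
    (∃ c₁ c₂ lamhat : ℝ, 0 < lamhat ∧
      ∀ s ∈ Icc 0 L,
        V s = c₁ * Real.exp (s / lamhat) + c₂ * Real.exp (-(s / lamhat))) ∧
    (0 ≤ V₀ → 0 ≤ VL → ∃ c₁ c₂ : ℝ,
      ∀ s ∈ Icc 0 L,
        V s = c₁ * Real.exp (s / (lam / Real.sqrt (1 + b))) +
          c₂ * Real.exp (-(s / (lam / Real.sqrt (1 + b))))) ∧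
    (V₀ ≤ 0 → VL ≤ 0 → ∃ c₁ c₂ : ℝ,
      ∀ s ∈ Icc 0 L,
        V s = c₁ * Real.exp (s / lam) + c₂ * Real.exp (-(s / lam))) := by
  subst hbc0 hbcL
  have hpos := cable_eq_exp_of_boundary_nonneg hlam.ne' (by linarith) hV hV' hODE
  have hneg := cable_eq_exp_of_boundary_nonpos hlam.ne' (by linarith) hV hV' hODE
  refine ⟨?_, hpos, hneg⟩
  rcases mul_nonneg_iff.1 hsign with ⟨h0, hL⟩ | ⟨h0, hL⟩
  · obtain ⟨c₁, c₂, hsol⟩ := hpos h0 hL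
    exact ⟨c₁, c₂, lam / Real.sqrt (1 + b), by positivity, hsol⟩
  · obtain ⟨c₁, c₂, hsol⟩ := hneg h0 hL
    exact ⟨c₁, c₂, lam, hlam, hsol⟩

/-- Lemma 1(a): if the boundary values of a solution of the cable equilibrium equation
`λ² V''(s) = V(s) + b·max(V(s), 0)` satisfy `V₀ · V_L ≥ 0`, then
`V(s) = c₁ exp(s/λ̂) + c₂ exp(−s/λ̂)` on `[0, L]` for some constants `c₁, c₂` and some
`λ̂ > 0`; specifically one may take `λ̂ = λ/√(1+b)` when both boundary values are
nonnegative, and `λ̂ = λ` when both boundary values are nonpositive. -/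
theorem cable_equilibrium_same_sign_boundary
    (lam L b : ℝ) (hlam : 0 < lam) (hL : 0 < L) (hb : 0 ≤ b)
    (V V' V'' : ℝ → ℝ)
    (hV : ∀ s ∈ Icc 0 L, HasDerivWithinAt V (V' s) (Icc 0 L) s)
    (hV' : ∀ s ∈ Icc 0 L, HasDerivWithinAt V' (V'' s) (Icc 0 L) s)
    (hV''cont : ContinuousOn V'' (Icc 0 L))
    (hODE : ∀ s ∈ Icc 0 L, lam ^ 2 * V'' s = V s + b * max (V s) 0)
    (V₀ VL : ℝ) (hbc0 : V 0 = V₀) (hbcL : V L = VL)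
    (hsign : V₀ * VL ≥ 0) :
    (∃ c₁ c₂ lamhat : ℝ, 0 < lamhat ∧
      ∀ s ∈ Icc 0 L,
        V s = c₁ * Real.exp (s / lamhat) + c₂ * Real.exp (-(s / lamhat))) ∧
    (0 ≤ V₀ → 0 ≤ VL → ∃ c₁ c₂ : ℝ,
      ∀ s ∈ Icc 0 L,
        V s = c₁ * Real.exp (s / (lam / Real.sqrt (1 + b))) +
          c₂ * Real.exp (-(s / (lam / Real.sqrt (1 + b))))) ∧
    (V₀ ≤ 0 → VL ≤ 0 → ∃ c₁ c₂ : ℝ,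
      ∀ s ∈ Icc 0 L,
        V s = c₁ * Real.exp (s / lam) + c₂ * Real.exp (-(s / lam))) :=
  cable_equilibrium_same_sign_boundary_general lam L b hlam hb V V' V'' hV hV' hODE V₀ VL hbc0 hbcL
    hsign
end

section
/- Let V : [0,L] → ℝ be twice continuously differentiable and satisfy λ²·V''(s) = V(s) + b·g(V(s)) for all s ∈ [0,L], with V(0) > 0 and V(L) < 0. Then there exists a unique s₁ ∈ (0,L) such that V(s₁) = 0; moreover V(s) > 0 for all s ∈ [0,s₁) and V(s) < 0 for all s ∈ (s₁,L]. -/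
/-!
Multiplying the equation by `V'` shows that the energy `λ² V'² - V² - b max(V, 0)²` is constant.
At a zero `z` of `V`, which exists by the intermediate value theorem, it equals `λ² V'(z)² ≥ 0`.
It cannot vanish: then `λ² V'² ≤ (1 + b)² V²` everywhere, and Grönwall's inequality started at `z`
gives `V ≡ 0` on `[z, L]`, contradicting `V(L) < 0`. So the energy is positive, `V'` never
vanishes, by Darboux it has constant sign, and `V(L) < V(0)` makes `V` strictly decreasing.
-/

open Set

theorem hasDerivAt_max_zero_sq (x : ℝ) :
    HasDerivAt (fun y : ℝ => max y 0 ^ 2) (2 * max x 0) x := by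
  refine hasDerivAt_of_hasDerivAt_of_ne' (f := fun y : ℝ => max y 0 ^ 2)
    (g := fun y => 2 * max y 0) (x := 0) (fun y hy => ?_) (by fun_prop) (by fun_prop) x
  rcases hy.lt_or_gt with hy | hy
  · have : (fun y : ℝ => max y 0 ^ 2) =ᶠ[nhds y] fun _ => 0 := by
      filter_upwards [Iio_mem_nhds hy] with t (ht : t < 0)
      simp [max_eq_right ht.le]
    simpa [max_eq_right hy.le] using (hasDerivAt_const y (0 : ℝ)).congr_of_eventuallyEq this
  · have : (fun y : ℝ => max y 0 ^ 2) =ᶠ[nhds y] fun t => t ^ 2 := by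
      filter_upwards [Ioi_mem_nhds hy] with t (ht : 0 < t)
      rw [max_eq_left ht.le]
    simpa [max_eq_left hy.le] using (hasDerivAt_pow 2 y).congr_of_eventuallyEq this

def cablePotential (b x : ℝ) : ℝ := x ^ 2 + b * max x 0 ^ 2

section cablePotential

variable {b : ℝ}

@[simp]
theorem cablePotential_zero : cablePotential b 0 = 0 := by simp [cablePotential]

theorem hasDerivAt_cablePotential (x : ℝ) :
    HasDerivAt (cablePotential b) (2 * (x + b * max x 0)) x := by
  refine ((hasDerivAt_pow 2 x).add ((hasDerivAt_max_zero_sq x).const_mul b)).congr_deriv ?_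
  ring

theorem cablePotential_nonneg (hb : 0 ≤ b) (x : ℝ) : 0 ≤ cablePotential b x := by
  unfold cablePotential
  positivity

theorem cablePotential_le_sq (hb : 0 ≤ b) (x : ℝ) : cablePotential b x ≤ ((1 + b) * x) ^ 2 := by
  have : max x 0 ^ 2 ≤ x ^ 2 := by
    rcases le_total 0 x with hx | hx <;> simp [hx, sq_nonneg]
  unfold cablePotential
  nlinarith [sq_nonneg x, mul_le_mul_of_nonneg_left this hb, mul_nonneg hb hb]

end cablePotential

theorem abs_le_div_mul_abs_of_sq_le {c d x y : ℝ} (hc : 0 < c) (hd : 0 ≤ d)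
    (h : (c * x) ^ 2 ≤ (d * y) ^ 2) : |x| ≤ d / c * |y| := by
  have := sq_le_sq.1 h
  rw [abs_mul, abs_mul, abs_of_pos hc, abs_of_nonneg hd] at this
  rw [div_mul_eq_mul_div, le_div_iff₀ hc]
  linarith

theorem Convex.energy_eq_of_hasDerivWithinAt {s : Set ℝ} (hs : Convex ℝ s) {c : ℝ}
    {f P V V' V'' : ℝ → ℝ} (hP : ∀ x, HasDerivAt P (2 * f x) x)
    (hV : ∀ t ∈ s, HasDerivWithinAt V (V' t) s t)
    (hV' : ∀ t ∈ s, HasDerivWithinAt V' (V'' t) s t)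
    (hODE : ∀ t ∈ s, c * V'' t = f (V t)) {x y : ℝ} (hx : x ∈ s) (hy : y ∈ s) :
    c * V' x ^ 2 - P (V x) = c * V' y ^ 2 - P (V y) := by
  have hE : ∀ t ∈ s, HasDerivWithinAt (fun t => c * V' t ^ 2 - P (V t)) 0 s t := by
    intro t ht
    refine (((hV' t ht).pow 2).const_mul c |>.sub
      ((hP (V t)).comp_hasDerivWithinAt t (hV t ht))).congr_deriv ?_
    linear_combination (2 * V' t) * hODE t ht
  have := hs.norm_image_sub_le_of_norm_hasDerivWithin_le hE (fun _ _ => norm_zero.le) hx hy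
  rw [zero_mul, norm_le_zero_iff, sub_eq_zero] at this
  exact this.symm

theorem eqOn_zero_of_abs_deriv_le_mul_abs_self {f f' : ℝ → ℝ} {K a b : ℝ}
    (hf : ∀ x ∈ Icc a b, HasDerivWithinAt f (f' x) (Icc a b) x) (ha : f a = 0)
    (bound : ∀ x ∈ Icc a b, |f' x| ≤ K * |f x|) : EqOn f 0 (Icc a b) :=
  eq_zero_of_abs_deriv_le_mul_abs_self_of_eq_zero_right
    (fun x hx => (hf x hx).continuousWithinAt)
    (fun x hx => (hf x (Ico_subset_Icc_self hx)).mono_of_mem_nhdsWithin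
      (Icc_mem_nhdsGE_of_mem hx))
    ha (fun x hx => bound x (Ico_subset_Icc_self hx))

theorem Convex.strictMonoOn_or_strictAntiOn_of_hasDerivWithinAt_ne_zero {D : Set ℝ}
    (hD : Convex ℝ D) {f f' : ℝ → ℝ} (hf : ∀ x ∈ D, HasDerivWithinAt f (f' x) D x)
    (hf' : ∀ x ∈ D, f' x ≠ 0) : StrictMonoOn f D ∨ StrictAntiOn f D := by
  have hcont : ContinuousOn f D := fun x hx => (hf x hx).continuousWithinAt
  have hint : ∀ x ∈ interior D, HasDerivWithinAt f (f' x) (interior D) x := fun x hx =>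
    (hf x (interior_subset hx)).mono interior_subset
  rcases hasDerivWithinAt_forall_lt_or_forall_gt_of_forall_ne hD hf hf' with hneg | hpos
  · exact .inr <| strictAntiOn_of_hasDerivWithinAt_neg hD hcont hint
      fun x hx => hneg x (interior_subset hx)
  · exact .inl <| strictMonoOn_of_hasDerivWithinAt_pos hD hcont hint
      fun x hx => hpos x (interior_subset hx)

theorem StrictAntiOn.zero_crossing {f : ℝ → ℝ} {a b z : ℝ} (hf : StrictAntiOn f (Icc a b))
    (hz : z ∈ Icc a b) (hfz : f z = 0) (ha : 0 < f a) (hb : f b < 0) :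
    z ∈ Ioo a b ∧ (∀ s ∈ Ico a z, 0 < f s) ∧ (∀ s ∈ Ioc z b, f s < 0) ∧
      ∀ s ∈ Icc a b, f s = 0 → s = z := by
  refine ⟨⟨hz.1.lt_of_ne ?_, hz.2.lt_of_ne ?_⟩, fun s hs => ?_, fun s hs => ?_,
    fun s hs hfs => hf.injOn hs hz (hfs.trans hfz.symm)⟩
  · rintro rfl; exact ha.ne' hfz
  · rintro rfl; exact hb.ne hfz
  · exact hfz ▸ hf ⟨hs.1, hs.2.le.trans hz.2⟩ hz hs.2
  · exact hfz ▸ hf hz ⟨hz.1.trans hs.1.le, hs.2⟩ hs.1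

theorem cable_equilibrium_unique_zero_crossing_general
    (lam L b : ℝ) (hlam : 0 < lam) (hL : 0 < L) (hb : 0 ≤ b)
    (V V' V'' : ℝ → ℝ)
    (hV : ∀ s ∈ Icc 0 L, HasDerivWithinAt V (V' s) (Icc 0 L) s)
    (hV' : ∀ s ∈ Icc 0 L, HasDerivWithinAt V' (V'' s) (Icc 0 L) s)
    (hODE : ∀ s ∈ Icc 0 L, lam ^ 2 * V'' s = V s + b * max (V s) 0)
    (h0 : 0 < V 0) (hLval : V L < 0) :
    ∃ s₁ ∈ Ioo 0 L, V s₁ = 0 ∧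
      (∀ s ∈ Ico 0 s₁, 0 < V s) ∧
      (∀ s ∈ Ioc s₁ L, V s < 0) ∧
      (∀ s ∈ Ioo 0 L, V s = 0 → s = s₁) := by
  obtain ⟨z, hz, hVz⟩ : ∃ z ∈ Icc 0 L, V z = 0 :=
    intermediate_value_Icc' hL.le (fun s hs => (hV s hs).continuousWithinAt) ⟨hLval.le, h0.le⟩
  have energy : ∀ s ∈ Icc 0 L,
      lam ^ 2 * V' s ^ 2 = lam ^ 2 * V' z ^ 2 + cablePotential b (V s) := by
    intro s hs
    have := (convex_Icc 0 L).energy_eq_of_hasDerivWithinAt (f := fun x => x + b * max x 0)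
      hasDerivAt_cablePotential hV hV' hODE hs hz
    rw [hVz, cablePotential_zero] at this
    linarith
  have hV'z : V' z ≠ 0 := by
    intro h
    have hsub : Icc z L ⊆ Icc 0 L := Icc_subset_Icc_left hz.1
    refine hLval.ne (eqOn_zero_of_abs_deriv_le_mul_abs_self (K := (1 + b) / lam)
      (fun s hs => (hV s (hsub hs)).mono hsub) hVz (fun s hs => ?_) ⟨hz.2, le_rfl⟩)
    refine abs_le_div_mul_abs_of_sq_le hlam (by linarith) ?_
    rw [mul_pow, energy s (hsub hs), h]
    simpa using cablePotential_le_sq hb (V s)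
  have hV'ne : ∀ s ∈ Icc 0 L, V' s ≠ 0 := by
    intro s hs h
    have := energy s hs
    rw [h, zero_pow two_ne_zero, mul_zero] at this
    linarith [cablePotential_nonneg hb (V s), mul_pos (pow_pos hlam 2) (sq_pos_of_ne_zero hV'z)]
  have hanti : StrictAntiOn V (Icc 0 L) :=
    ((convex_Icc 0 L).strictMonoOn_or_strictAntiOn_of_hasDerivWithinAt_ne_zero hV
      hV'ne).resolve_left
      fun hmono => lt_asymm (hmono ⟨le_rfl, hL.le⟩ ⟨hL.le, le_rfl⟩ hL) (hLval.trans h0)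
  obtain ⟨hzI, hpos, hneg, huniq⟩ := hanti.zero_crossing hz hVz h0 hLval
  exact ⟨z, hzI, hVz, hpos, hneg, fun s hs => huniq s (Ioo_subset_Icc_self hs)⟩

/-- Single zero crossing of the cable equilibrium equation
`λ² V''(s) = V(s) + b·max(V(s), 0)` when the boundary values have opposite signs:
if `V(0) > 0` and `V(L) < 0`, there is a unique `s₁ ∈ (0, L)` with `V(s₁) = 0`;
moreover `V > 0` on `[0, s₁)` and `V < 0` on `(s₁, L]`. -/
theorem cable_equilibrium_unique_zero_crossing
    (lam L b : ℝ) (hlam : 0 < lam) (hL : 0 < L) (hb : 0 ≤ b)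
    (V V' V'' : ℝ → ℝ)
    (hV : ∀ s ∈ Icc 0 L, HasDerivWithinAt V (V' s) (Icc 0 L) s)
    (hV' : ∀ s ∈ Icc 0 L, HasDerivWithinAt V' (V'' s) (Icc 0 L) s)
    (hV''cont : ContinuousOn V'' (Icc 0 L))
    (hODE : ∀ s ∈ Icc 0 L, lam ^ 2 * V'' s = V s + b * max (V s) 0)
    (h0 : 0 < V 0) (hLval : V L < 0) :
    ∃ s₁ ∈ Ioo 0 L, V s₁ = 0 ∧
      (∀ s ∈ Ico 0 s₁, 0 < V s) ∧
      (∀ s ∈ Ioc s₁ L, V s < 0) ∧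
      (∀ s ∈ Ioo 0 L, V s = 0 → s = s₁) :=
  cable_equilibrium_unique_zero_crossing_general lam L b hlam hL hb V V' V'' hV hV' hODE h0 hLval
end

section
/- (Lemma 1(b)) Let V : [0,L] → ℝ be twice continuously differentiable and satisfy λ²·V''(s) = V(s) + b·g(V(s)) for all s ∈ [0,L], with V(0) > 0 and V(L) < 0. Set λ̂₁ = λ/√(1+b) and λ̂₂ = λ. Then there exist a point s₁ ∈ (0,L) with V(s₁) = 0 and constants k₁, k₂, p₁, p₂ ∈ ℝ such that V(s) = k₁·exp(s/λ̂₁) + k₂·exp(−s/λ̂₁) for all s ∈ [0,s₁], V(s) = p₁·exp(s/λ̂₂) + p₂·exp(−s/λ̂₂) for all s ∈ [s₁,L], and the two pieces have matching first derivatives at s₁, i.e., (k₁/λ̂₁)·exp(s₁/λ̂₁) − (k₂/λ̂₁)·exp(−s₁/λ̂₁) = (p₁/λ̂₂)·exp(s₁/λ̂₂) − (p₂/λ̂₂)·exp(−s₁/λ̂₂). -/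
/-!
Let `s₁` be the first zero of `V`. Wherever `V > 0` the equation gives `V'' > 0`, so `V` is
strictly convex there and cannot have a positive local maximum; hence the maximum of `V` on
`[s₁, L]` is `≤ 0`. On `[0, s₁]` and on `[s₁, L]` the equation is therefore linear,
`λ̂² V'' = V`, and the first integrals `(V' ± V/λ̂)·exp(∓s/λ̂)` give the exponential form of
both `V` and `V'`. The derivatives of the two pieces match at `s₁` because both equal `V'(s₁)`.
-/

open Set Topology Real

section ExponentialSolutions

variable {a e lamh : ℝ} {V V' V'' : ℝ → ℝ}

lemma exists_deriv_add_div_eq_mul_exp (hl : lamh ≠ 0)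
    (hV : ∀ s ∈ Icc a e, HasDerivWithinAt V (V' s) (Icc a e) s)
    (hV' : ∀ s ∈ Icc a e, HasDerivWithinAt V' (V'' s) (Icc a e) s)
    (hODE : ∀ s ∈ Icc a e, lamh ^ 2 * V'' s = V s) :
    ∃ A, ∀ s ∈ Icc a e, V' s + V s / lamh = A * exp (s / lamh) := by
  set F : ℝ → ℝ := fun s ↦ (V' s + V s / lamh) * exp (-(s / lamh))
  have hF : ∀ s ∈ Icc a e, HasDerivWithinAt F 0 (Icc a e) s := by
    intro s hs
    have hexp := (((hasDerivAt_id s).div_const lamh).neg.exp).hasDerivWithinAt (s := Icc a e)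
    have hV''s : V'' s = V s / lamh ^ 2 := by rw [← hODE s hs]; field_simp
    refine (((hV' s hs).add ((hV s hs).div_const lamh)).mul hexp).congr_deriv ?_
    simp only [Pi.add_apply, Pi.neg_apply, id, hV''s]
    field_simp
    ring
  have hconst := constant_of_has_deriv_right_zero (fun s hs ↦ (hF s hs).continuousWithinAt)
    fun s hs ↦ (hF s (Ico_subset_Icc_self hs)).mono_of_mem_nhdsWithin (Icc_mem_nhdsGE_of_mem hs)
  refine ⟨F a, fun s hs ↦ ?_⟩
  rw [← hconst s hs, mul_assoc, ← exp_add, neg_add_cancel, exp_zero, mul_one]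

lemma exists_eq_exp_combination (hl : lamh ≠ 0)
    (hV : ∀ s ∈ Icc a e, HasDerivWithinAt V (V' s) (Icc a e) s)
    (hV' : ∀ s ∈ Icc a e, HasDerivWithinAt V' (V'' s) (Icc a e) s)
    (hODE : ∀ s ∈ Icc a e, lamh ^ 2 * V'' s = V s) :
    ∃ k₁ k₂ : ℝ,
      (∀ s ∈ Icc a e, V s = k₁ * exp (s / lamh) + k₂ * exp (-(s / lamh))) ∧
      ∀ s ∈ Icc a e, V' s = k₁ / lamh * exp (s / lamh) - k₂ / lamh * exp (-(s / lamh)) := by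
  obtain ⟨A, hA⟩ := exists_deriv_add_div_eq_mul_exp hl hV hV' hODE
  obtain ⟨B, hB⟩ := exists_deriv_add_div_eq_mul_exp (neg_ne_zero.2 hl) hV hV'
    (by simpa only [neg_sq] using hODE)
  refine ⟨lamh * A / 2, -(lamh * B / 2), fun s hs ↦ ?_, fun s hs ↦ ?_⟩ <;>
    have hAs := hA s hs <;> have hBs := hB s hs <;> simp only [div_neg] at hBs
  · field_simp at hAs hBs ⊢
    linear_combination hAs - hBs
  · field_simp
    linear_combination hAs + hBs

end ExponentialSolutions

lemma exists_first_zero_of_pos_of_neg {f : ℝ → ℝ} {a b : ℝ} (hab : a ≤ b)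
    (hf : ContinuousOn f (Icc a b)) (ha : 0 < f a) (hb : f b < 0) :
    ∃ c ∈ Ioo a b, f c = 0 ∧ ∀ s ∈ Icc a c, 0 ≤ f s := by
  have hS : IsCompact (Icc a b ∩ f ⁻¹' Iic 0) :=
    isCompact_Icc.of_isClosed_subset
      (hf.preimage_isClosed_of_isClosed isClosed_Icc isClosed_Iic) inter_subset_left
  obtain ⟨c, ⟨hc, hfc⟩, hleast⟩ := hS.exists_isLeast ⟨b, right_mem_Icc.2 hab, hb.le⟩
  have hnonneg : ∀ s ∈ Icc a c, 0 ≤ f s := by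
    intro s hs
    by_contra! hs_neg
    have hsub : Icc a s ⊆ Icc a b := Icc_subset_Icc_right (hs.2.trans hc.2)
    obtain ⟨d, hd, hfd⟩ := intermediate_value_Icc' hs.1 (hf.mono hsub) ⟨hs_neg.le, ha.le⟩
    have hcd : c ≤ d := hleast ⟨hsub hd, hfd.le⟩
    have hds : d = s := le_antisymm hd.2 (hs.2.trans hcd)
    exact hs_neg.ne (hds ▸ hfd)
  have hfc0 : f c = 0 := le_antisymm hfc (hnonneg c (right_mem_Icc.2 hc.1))
  refine ⟨c, ⟨hc.1.lt_of_ne ?_, hc.2.lt_of_ne ?_⟩, hfc0, hnonneg⟩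
  · rintro rfl; exact ha.ne' hfc0
  · rintro rfl; exact hb.ne hfc0

lemma nonpos_of_forall_not_isLocalMax {f : ℝ → ℝ} {a b : ℝ}
    (hf : ContinuousOn f (Icc a b)) (ha : f a ≤ 0) (hb : f b ≤ 0)
    (hmax : ∀ x ∈ Ioo a b, 0 < f x → ¬ IsLocalMax f x) :
    ∀ x ∈ Icc a b, f x ≤ 0 := by
  intro x hx
  obtain ⟨t, ht, htmax⟩ := isCompact_Icc.exists_isMaxOn ⟨x, hx⟩ hf
  by_contra! hx_pos
  have ht_pos : 0 < f t := hx_pos.trans_le (htmax hx)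
  have ht_Ioo : t ∈ Ioo a b := ⟨ht.1.lt_of_ne (by rintro rfl; linarith),
    ht.2.lt_of_ne (by rintro rfl; linarith)⟩
  exact hmax t ht_Ioo ht_pos (htmax.isLocalMax (Icc_mem_nhds ht_Ioo.1 ht_Ioo.2))

lemma strictConvexOn_of_hasDerivWithinAt2_pos {D : Set ℝ} (hD : Convex ℝ D) {f f' f'' : ℝ → ℝ}
    (hf : ContinuousOn f D) (hf' : ∀ x ∈ interior D, HasDerivWithinAt f (f' x) (interior D) x)
    (hf'' : ∀ x ∈ interior D, HasDerivWithinAt f' (f'' x) (interior D) x)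
    (hf''₀ : ∀ x ∈ interior D, 0 < f'' x) : StrictConvexOn ℝ D f := by
  have hderiv : (interior D).EqOn (deriv f) f' := deriv_eqOn isOpen_interior hf'
  have hmono : StrictMonoOn f' (interior D) :=
    strictMonoOn_of_hasDerivWithinAt_pos hD.interior (fun x hx ↦ (hf'' x hx).continuousWithinAt)
      (by rwa [interior_interior]) (by rwa [interior_interior])
  exact (hmono.congr hderiv.symm).strictConvexOn_of_deriv hD hf

lemma StrictConvexOn.not_isLocalMax {D : Set ℝ} {f : ℝ → ℝ} {x : ℝ} (hf : StrictConvexOn ℝ D f)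
    (hD : D ∈ 𝓝 x) : ¬ IsLocalMax f x := by
  intro hmax
  obtain ⟨ε, hε, hnear⟩ := Metric.eventually_nhds_iff.1 (hmax.and hD)
  have hleft := @hnear (x - ε / 2) (by rw [Real.dist_eq, abs_lt]; constructor <;> linarith)
  have hright := @hnear (x + ε / 2) (by rw [Real.dist_eq, abs_lt]; constructor <;> linarith)
  have hmid := hf.2 hleft.2 hright.2 (by linarith) one_half_pos one_half_pos (add_halves 1)
  have hmidpoint : (1 / 2 : ℝ) • (x - ε / 2) + (1 / 2 : ℝ) • (x + ε / 2) = x := by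
    simp only [smul_eq_mul]; ring
  rw [hmidpoint, smul_eq_mul, smul_eq_mul] at hmid
  linarith [hleft.1, hright.1]

lemma not_isLocalMax_of_cable {lam L b x : ℝ} {V V' V'' : ℝ → ℝ} (hb : 0 ≤ b)
    (hV : ∀ s ∈ Icc 0 L, HasDerivWithinAt V (V' s) (Icc 0 L) s)
    (hV' : ∀ s ∈ Icc 0 L, HasDerivWithinAt V' (V'' s) (Icc 0 L) s)
    (hODE : ∀ s ∈ Icc 0 L, lam ^ 2 * V'' s = V s + b * max (V s) 0)
    (hx : x ∈ Ioo 0 L) (hpos : 0 < V x) : ¬ IsLocalMax V x := by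
  have hcont : ContinuousAt V x :=
    (hV x (Ioo_subset_Icc_self hx)).continuousWithinAt.continuousAt (Icc_mem_nhds hx.1 hx.2)
  obtain ⟨ε, hε, hball⟩ := Metric.eventually_nhds_iff_ball.1
    (Filter.Eventually.and (Ioo_mem_nhds hx.1 hx.2) (hcont.eventually (lt_mem_nhds hpos)))
  have hsub : Metric.ball x ε ⊆ Icc 0 L := fun y hy ↦ Ioo_subset_Icc_self (hball y hy).1
  have hconvex : StrictConvexOn ℝ (Metric.ball x ε) V := by
    refine strictConvexOn_of_hasDerivWithinAt2_pos (f' := V') (f'' := V'') (convex_ball x ε)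
      (fun y hy ↦ (hV y (hsub hy)).continuousWithinAt.mono hsub) ?_ ?_ ?_ <;>
      simp only [Metric.isOpen_ball.interior_eq]
    · exact fun y hy ↦ (hV y (hsub hy)).mono hsub
    · exact fun y hy ↦ (hV' y (hsub hy)).mono hsub
    · intro y hy
      have hVy : 0 < V y := (hball y hy).2
      have hrhs : 0 < lam ^ 2 * V'' y := by
        rw [hODE y (hsub hy), max_eq_left hVy.le]; positivity
      exact pos_of_mul_pos_right hrhs (sq_nonneg lam)
  exact hconvex.not_isLocalMax (Metric.ball_mem_nhds x hε)

theorem cable_equilibrium_opposite_sign_boundary_general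
    (lam L b : ℝ) (hlam : 0 < lam) (hL : 0 < L) (hb : 0 ≤ b)
    (V V' V'' : ℝ → ℝ)
    (hV : ∀ s ∈ Icc 0 L, HasDerivWithinAt V (V' s) (Icc 0 L) s)
    (hV' : ∀ s ∈ Icc 0 L, HasDerivWithinAt V' (V'' s) (Icc 0 L) s)
    (hODE : ∀ s ∈ Icc 0 L, lam ^ 2 * V'' s = V s + b * max (V s) 0)
    (h0 : 0 < V 0) (hLval : V L < 0)
    (lamhat₁ lamhat₂ : ℝ)
    (hlamhat₁ : lamhat₁ = lam / Real.sqrt (1 + b)) (hlamhat₂ : lamhat₂ = lam) :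
    ∃ s₁ ∈ Ioo 0 L, V s₁ = 0 ∧
      ∃ k₁ k₂ p₁ p₂ : ℝ,
        (∀ s ∈ Icc 0 s₁,
          V s = k₁ * Real.exp (s / lamhat₁) + k₂ * Real.exp (-(s / lamhat₁))) ∧
        (∀ s ∈ Icc s₁ L,
          V s = p₁ * Real.exp (s / lamhat₂) + p₂ * Real.exp (-(s / lamhat₂))) ∧
        (k₁ / lamhat₁) * Real.exp (s₁ / lamhat₁) -
            (k₂ / lamhat₁) * Real.exp (-(s₁ / lamhat₁)) =
          (p₁ / lamhat₂) * Real.exp (s₁ / lamhat₂) -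
            (p₂ / lamhat₂) * Real.exp (-(s₁ / lamhat₂)) := by
  have hVcont : ContinuousOn V (Icc 0 L) := fun s hs ↦ (hV s hs).continuousWithinAt
  obtain ⟨s₁, hs₁, hVs₁, hVnonneg⟩ := exists_first_zero_of_pos_of_neg hL.le hVcont h0 hLval
  have hleft : Icc 0 s₁ ⊆ Icc 0 L := Icc_subset_Icc_right hs₁.2.le
  have hright : Icc s₁ L ⊆ Icc 0 L := Icc_subset_Icc_left hs₁.1.le
  have hVnonpos : ∀ s ∈ Icc s₁ L, V s ≤ 0 :=
    nonpos_of_forall_not_isLocalMax (hVcont.mono hright) hVs₁.le hLval.le fun x hx ↦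
      not_isLocalMax_of_cable hb hV hV' hODE ⟨hs₁.1.trans hx.1, hx.2⟩
  have hsq₁ : lamhat₁ ^ 2 = lam ^ 2 / (1 + b) := by
    rw [hlamhat₁, div_pow, Real.sq_sqrt (by linarith)]
  obtain ⟨k₁, k₂, hk, hk'⟩ := exists_eq_exp_combination (lamh := lamhat₁) (V'' := V'')
    (by rw [hlamhat₁]; positivity) (fun s hs ↦ (hV s (hleft hs)).mono hleft)
    (fun s hs ↦ (hV' s (hleft hs)).mono hleft) fun s hs ↦ by
      have hode := hODE s (hleft hs)
      rw [max_eq_left (hVnonneg s hs)] at hode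
      rw [hsq₁]
      field_simp
      linarith
  subst hlamhat₂
  obtain ⟨p₁, p₂, hp, hp'⟩ := exists_eq_exp_combination (lamh := lamhat₂) (V'' := V'')
    hlam.ne' (fun s hs ↦ (hV s (hright hs)).mono hright)
    (fun s hs ↦ (hV' s (hright hs)).mono hright) fun s hs ↦ by
      have hode := hODE s (hright hs)
      rw [max_eq_right (hVnonpos s hs)] at hode
      linarith
  refine ⟨s₁, hs₁, hVs₁, k₁, k₂, p₁, p₂, hk, hp, ?_⟩
  rw [← hk' s₁ (right_mem_Icc.2 hs₁.1.le), ← hp' s₁ (left_mem_Icc.2 hs₁.2.le)]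

/-- Lemma 1(b): if `V(0) > 0` and `V(L) < 0`, then the solution of the cable
equilibrium equation `λ² V''(s) = V(s) + b·max(V(s), 0)` crosses zero at some
`s₁ ∈ (0, L)` and is a two-piece combination of exponentials: with
`λ̂₁ = λ/√(1+b)` on `[0, s₁]` and `λ̂₂ = λ` on `[s₁, L]`, the two pieces having
matching first derivatives at `s₁`. -/
theorem cable_equilibrium_opposite_sign_boundary
    (lam L b : ℝ) (hlam : 0 < lam) (hL : 0 < L) (hb : 0 ≤ b)
    (V V' V'' : ℝ → ℝ)
    (hV : ∀ s ∈ Icc 0 L, HasDerivWithinAt V (V' s) (Icc 0 L) s)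
    (hV' : ∀ s ∈ Icc 0 L, HasDerivWithinAt V' (V'' s) (Icc 0 L) s)
    (hV''cont : ContinuousOn V'' (Icc 0 L))
    (hODE : ∀ s ∈ Icc 0 L, lam ^ 2 * V'' s = V s + b * max (V s) 0)
    (h0 : 0 < V 0) (hLval : V L < 0)
    (lamhat₁ lamhat₂ : ℝ)
    (hlamhat₁ : lamhat₁ = lam / Real.sqrt (1 + b)) (hlamhat₂ : lamhat₂ = lam) :
    ∃ s₁ ∈ Ioo 0 L, V s₁ = 0 ∧
      ∃ k₁ k₂ p₁ p₂ : ℝ,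
        (∀ s ∈ Icc 0 s₁,
          V s = k₁ * Real.exp (s / lamhat₁) + k₂ * Real.exp (-(s / lamhat₁))) ∧
        (∀ s ∈ Icc s₁ L,
          V s = p₁ * Real.exp (s / lamhat₂) + p₂ * Real.exp (-(s / lamhat₂))) ∧
        (k₁ / lamhat₁) * Real.exp (s₁ / lamhat₁) -
            (k₂ / lamhat₁) * Real.exp (-(s₁ / lamhat₁)) =
          (p₁ / lamhat₂) * Real.exp (s₁ / lamhat₂) -
            (p₂ / lamhat₂) * Real.exp (-(s₁ / lamhat₂)) :=
  cable_equilibrium_opposite_sign_boundary_general lam L b hlam hL hb V V' V'' hV hV' hODE h0 hLval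
    lamhat₁ lamhat₂ hlamhat₁ hlamhat₂
end

section
/- Let V₁, V₂ : [0,L] → ℝ be twice continuously differentiable functions both satisfying λ²·V''(s) = V(s) + b·g(V(s)) for all s ∈ [0,L], with V₁(0) = V₂(0) and V₁(L) = V₂(L). Then V₁(s) = V₂(s) for all s ∈ [0,L]. -/
open Set

/-- Maximum principle lemma: if `u` is C² on `[0,L]`, `u(0)=u(L)=0`, and `u'' > 0`
wherever `u > 0`, then `u ≤ 0` on `[0,L]`. -/
lemma cable_max_principle (L : ℝ) (hL : 0 < L) (u u' u'' : ℝ → ℝ)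
    (hu : ∀ s ∈ Icc 0 L, HasDerivWithinAt u (u' s) (Icc 0 L) s)
    (hu' : ∀ s ∈ Icc 0 L, HasDerivWithinAt u' (u'' s) (Icc 0 L) s)
    (hu''c : ContinuousOn u'' (Icc 0 L))
    (hpos : ∀ s ∈ Icc 0 L, 0 < u s → 0 < u'' s)
    (h0 : u 0 = 0) (hLb : u L = 0) :
    ∀ s ∈ Icc 0 L, u s ≤ 0 := by
  by_contra hcon
  push_neg at hcon
  obtain ⟨s₀, hs₀, hs₀pos⟩ := hcon
  have hucont : ContinuousOn u (Icc 0 L) := fun s hs => (hu s hs).continuousWithinAt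
  obtain ⟨c, hc, hmax⟩ := isCompact_Icc.exists_isMaxOn ⟨0, left_mem_Icc.2 hL.le⟩ hucont
  have hM : 0 < u c := lt_of_lt_of_le hs₀pos (hmax hs₀)
  have hc0 : 0 < c := by
    rcases lt_or_eq_of_le hc.1 with h | h
    · exact h
    · exfalso; rw [← h, h0] at hM; exact lt_irrefl 0 hM
  have hcL : c < L := by
    rcases lt_or_eq_of_le hc.2 with h | h
    · exact h
    · exfalso; rw [h, hLb] at hM; exact lt_irrefl 0 hM
  have hnhds : Icc 0 L ∈ nhds c := Icc_mem_nhds hc0 hcL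
  have hu'c : u' c = 0 :=
    ((hmax.isLocalMax hnhds)).hasDerivAt_eq_zero ((hu c hc).hasDerivAt hnhds)
  have hu''pos : 0 < u'' c := hpos c hc hM
  have hcontAt : ContinuousAt u'' c := (hu''c c hc).continuousAt hnhds
  have hmem : u'' ⁻¹' Ioi 0 ∈ nhds c := hcontAt (Ioi_mem_nhds hu''pos)
  obtain ⟨ε, hε, hball⟩ := Metric.mem_nhds_iff.mp hmem
  set d := min (c + ε / 2) L with hd
  have hcd : c < d := lt_min (by linarith) hcL
  have hdL : d ≤ L := min_le_right _ _
  have hdmem : d ∈ Icc 0 L := ⟨le_trans hc.1 hcd.le, hdL⟩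
  have hsub : Icc c d ⊆ Icc 0 L := Icc_subset_Icc hc.1 hdL
  have hballsub : Icc c d ⊆ Metric.ball c ε := by
    intro s hs
    have h1 : s - c < ε := by
      have : s ≤ c + ε / 2 := le_trans hs.2 (min_le_left _ _)
      linarith
    have h2 : c - s ≤ 0 := by linarith [hs.1]
    simp only [Metric.mem_ball, Real.dist_eq, abs_lt]
    constructor <;> linarith
  have hintsub : interior (Icc c d) ⊆ Icc c d := interior_subset
  have hmono' : StrictMonoOn u' (Icc c d) := by
    apply strictMonoOn_of_hasDerivWithinAt_pos (convex_Icc c d)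
      (fun s hs => ((hu' s (hsub hs)).continuousWithinAt).mono hsub)
      (fun x hx => ((hu' x (hsub (hintsub hx))).mono (hintsub.trans hsub)))
    intro x hx
    exact hball (hballsub (hintsub hx))
  have hu'pos : ∀ x ∈ interior (Icc c d), 0 < u' x := by
    intro x hx
    rw [interior_Icc] at hx
    have := hmono' (left_mem_Icc.2 hcd.le) ⟨hx.1.le, hx.2.le⟩ hx.1
    rwa [hu'c] at this
  have hmono : StrictMonoOn u (Icc c d) := by
    apply strictMonoOn_of_hasDerivWithinAt_pos (convex_Icc c d)
      (fun s hs => ((hu s (hsub hs)).continuousWithinAt).mono hsub)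
      (fun x hx => ((hu x (hsub (hintsub hx))).mono (hintsub.trans hsub)))
      hu'pos
  have : u c < u d := hmono (left_mem_Icc.2 hcd.le) (right_mem_Icc.2 hcd.le) hcd
  exact absurd (hmax hdmem) (not_le.mpr this)

/-- Uniqueness of solutions to the fixed-fixed boundary value problem for the cable
equilibrium equation `λ² V''(s) = V(s) + b·max(V(s), 0)` on `[0, L]`: two C²
solutions with the same boundary values coincide. -/
theorem cable_equilibrium_bvp_unique
    (lam L b : ℝ) (hlam : 0 < lam) (hL : 0 < L) (hb : 0 ≤ b)
    (V₁ V₁' V₁'' V₂ V₂' V₂'' : ℝ → ℝ)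
    (hV₁ : ∀ s ∈ Icc 0 L, HasDerivWithinAt V₁ (V₁' s) (Icc 0 L) s)
    (hV₁' : ∀ s ∈ Icc 0 L, HasDerivWithinAt V₁' (V₁'' s) (Icc 0 L) s)
    (hV₁''cont : ContinuousOn V₁'' (Icc 0 L))
    (hODE₁ : ∀ s ∈ Icc 0 L, lam ^ 2 * V₁'' s = V₁ s + b * max (V₁ s) 0)
    (hV₂ : ∀ s ∈ Icc 0 L, HasDerivWithinAt V₂ (V₂' s) (Icc 0 L) s)
    (hV₂' : ∀ s ∈ Icc 0 L, HasDerivWithinAt V₂' (V₂'' s) (Icc 0 L) s)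
    (hV₂''cont : ContinuousOn V₂'' (Icc 0 L))
    (hODE₂ : ∀ s ∈ Icc 0 L, lam ^ 2 * V₂'' s = V₂ s + b * max (V₂ s) 0)
    (hbc0 : V₁ 0 = V₂ 0) (hbcL : V₁ L = V₂ L) :
    ∀ s ∈ Icc 0 L, V₁ s = V₂ s := by
  have hlam2 : 0 < lam ^ 2 := by positivity
  have hkey : ∀ s ∈ Icc 0 L, 0 < V₁ s - V₂ s → 0 < V₁'' s - V₂'' s := by
    intro s hs h
    have h1 := hODE₁ s hs
    have h2 := hODE₂ s hs
    have hmax : max (V₂ s) 0 ≤ max (V₁ s) 0 := max_le_max (by linarith) le_rfl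
    have hprod : 0 < lam ^ 2 * (V₁'' s - V₂'' s) := by
      nlinarith [mul_nonneg hb (sub_nonneg.mpr hmax)]
    nlinarith [hprod, hlam2]
  have hkey' : ∀ s ∈ Icc 0 L, 0 < V₂ s - V₁ s → 0 < V₂'' s - V₁'' s := by
    intro s hs h
    have h1 := hODE₁ s hs
    have h2 := hODE₂ s hs
    have hmax : max (V₁ s) 0 ≤ max (V₂ s) 0 := max_le_max (by linarith) le_rfl
    have hprod : 0 < lam ^ 2 * (V₂'' s - V₁'' s) := by
      nlinarith [mul_nonneg hb (sub_nonneg.mpr hmax)]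
    nlinarith [hprod, hlam2]
  have hle1 : ∀ s ∈ Icc 0 L, V₁ s - V₂ s ≤ 0 :=
    cable_max_principle L hL (fun s => V₁ s - V₂ s) (fun s => V₁' s - V₂' s)
      (fun s => V₁'' s - V₂'' s)
      (fun s hs => (hV₁ s hs).sub (hV₂ s hs))
      (fun s hs => (hV₁' s hs).sub (hV₂' s hs))
      (hV₁''cont.sub hV₂''cont)
      hkey
      (by simp [hbc0]) (by simp [hbcL])
  have hle2 : ∀ s ∈ Icc 0 L, V₂ s - V₁ s ≤ 0 :=
    cable_max_principle L hL (fun s => V₂ s - V₁ s) (fun s => V₂' s - V₁' s)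
      (fun s => V₂'' s - V₁'' s)
      (fun s hs => (hV₂ s hs).sub (hV₁ s hs))
      (fun s hs => (hV₂' s hs).sub (hV₁' s hs))
      (hV₂''cont.sub hV₁''cont)
      hkey'
      (by simp [hbc0]) (by simp [hbcL])
  intro s hs
  have := hle1 s hs
  have := hle2 s hs
  linarith
end

section
/- Consider the closed-loop cable dynamics on [0,L]: functions V, W : [0,∞) × [0,L] → ℝ jointly continuous, with ∂V/∂t, ∂W/∂t, ∂V/∂s, ∂²V/∂s² existing and jointly continuous, satisfying for all t ≥ 0 and s ∈ [0,L]: τ·∂V/∂t = λ²·∂²V/∂s² − V − W + I and τ̃·∂W/∂t = −W + b·g(V), where the control current is I(t,s) = b·g(V(t,s)) + (1−β)·V(t,s) + β·V̄(s) − λ²·V̄''(s) for a twice continuously differentiable reference voltage V̄ : [0,L] → ℝ with V̄'(0) = V̄'(L) = 0, and with Neumann boundary conditions ∂V/∂s(t,0) = ∂V/∂s(t,L) = 0 for all t ≥ 0. Define the Lyapunov functional 𝓛₀(t) = (1/2)·∫₀ᴸ [ τ·(V(t,s) − V̄(s))² + τ̃·(W(t,s) − b·g(V̄(s)))² ] ds.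 If b ≥ 0, τ > 0, τ̃ > 0, λ > 0 and β > (b+1)²/4 + b, then 𝓛₀ is nonincreasing in t on [0,∞). -/
open Set Filter Topology MeasureTheory intervalIntegral Function
open scoped Interval

/-!
With `e = V − V̄`, `w = W − b g(V̄)` and `d = g(V) − g(V̄)`, the closed-loop equations read
`τ ∂ₜV = λ² ∂ₛ²e − β e − w + b d` and `τ̃ ∂ₜW = −w + b d`, so differentiating under the
integral gives `𝓛₀' = λ² ∫ e ∂ₛ²e + ∫ q(e, w, d)`. Integrating by parts with the Neumann
conditions turns the first term into `−λ² ∫ (∂ₛe)² ≤ 0`; since `g` is 1-Lipschitz, `|d| ≤ |e|`,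
and then `q` is negative semidefinite as soon as `β > (b + 1)²/4 + b`.
-/

section ParametricIntegral

variable {F F' : ℝ → ℝ → ℝ} {D : Set ℝ} {a b : ℝ}

theorem continuousOn_intervalIntegral_of_continuousOn_prod (hD : IsClosed D)
    (hF : ContinuousOn (uncurry F) (D ×ˢ [[a, b]])) :
    ContinuousOn (fun t => ∫ s in a..b, F t s) D := by
  intro t₀ ht₀
  obtain ⟨M, hM⟩ := ((isCompact_Icc.inter_left hD).prod isCompact_uIcc).exists_bound_of_continuousOn
    (hF.mono (prod_mono inter_subset_left Subset.rfl))
  have hnear : D ∩ Icc (t₀ - 1) (t₀ + 1) ∈ 𝓝[D] t₀ :=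
    inter_mem_nhdsWithin D (Icc_mem_nhds (by linarith) (by linarith))
  refine continuousWithinAt_of_dominated_interval (bound := fun _ => M) ?_ ?_
    intervalIntegrable_const ?_
  · filter_upwards [self_mem_nhdsWithin] with t ht
    exact ((hF.uncurry_left t ht).mono uIoc_subset_uIcc).aestronglyMeasurable measurableSet_uIoc
  · filter_upwards [hnear] with t ht
    exact ae_of_all _ fun s hs => hM (t, s) ⟨ht, uIoc_subset_uIcc hs⟩
  · exact ae_of_all _ fun s hs => hF.uncurry_right s (uIoc_subset_uIcc hs) t₀ ht₀

theorem hasDerivAt_intervalIntegral_of_continuousOn_prod {t₀ : ℝ} (ht₀ : D ∈ 𝓝 t₀)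
    (hF : ContinuousOn (uncurry F) (D ×ˢ [[a, b]]))
    (hF' : ContinuousOn (uncurry F') (D ×ˢ [[a, b]]))
    (hderiv : ∀ t ∈ D, ∀ s ∈ [[a, b]], HasDerivWithinAt (F · s) (F' t s) D t) :
    HasDerivAt (fun t => ∫ s in a..b, F t s) (∫ s in a..b, F' t₀ s) t₀ := by
  obtain ⟨ε, hε, hεD⟩ := Metric.nhds_basis_closedBall.mem_iff.1 ht₀
  obtain ⟨M, hM⟩ := ((isCompact_closedBall t₀ ε).prod isCompact_uIcc).exists_bound_of_continuousOn
    (hF'.mono (prod_mono hεD Subset.rfl))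
  have hball : ∀ t ∈ Metric.ball t₀ ε, D ∈ 𝓝 t := fun t ht =>
    mem_of_superset (Metric.isOpen_ball.mem_nhds ht) (Metric.ball_subset_closedBall.trans hεD)
  have hmeas : ∀ {G : ℝ → ℝ → ℝ}, ContinuousOn (uncurry G) (D ×ˢ [[a, b]]) →
      ∀ t ∈ D, AEStronglyMeasurable (G t) (volume.restrict (Ι a b)) := fun hG t ht =>
    ((hG.uncurry_left t ht).mono uIoc_subset_uIcc).aestronglyMeasurable measurableSet_uIoc
  refine (hasDerivAt_integral_of_dominated_loc_of_deriv_le (bound := fun _ => M)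
    (Metric.ball_mem_nhds t₀ hε) ?_ ((hF.uncurry_left t₀ (mem_of_mem_nhds ht₀)).intervalIntegrable)
    (hmeas hF' t₀ (mem_of_mem_nhds ht₀)) ?_ intervalIntegrable_const ?_).2
  · filter_upwards [ht₀] with t ht using hmeas hF t ht
  · exact ae_of_all _ fun s hs t ht =>
      hM (t, s) ⟨Metric.ball_subset_closedBall ht, uIoc_subset_uIcc hs⟩
  · exact ae_of_all _ fun s hs t ht =>
      (hderiv t (mem_of_mem_nhds (hball t ht)) s (uIoc_subset_uIcc hs)).hasDerivAt (hball t ht)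

theorem antitoneOn_intervalIntegral_of_integral_deriv_nonpos (hD : Convex ℝ D) (hDc : IsClosed D)
    (hF : ContinuousOn (uncurry F) (D ×ˢ [[a, b]]))
    (hF' : ContinuousOn (uncurry F') (D ×ˢ [[a, b]]))
    (hderiv : ∀ t ∈ D, ∀ s ∈ [[a, b]], HasDerivWithinAt (F · s) (F' t s) D t)
    (hnonpos : ∀ t ∈ interior D, ∫ s in a..b, F' t s ≤ 0) :
    AntitoneOn (fun t => ∫ s in a..b, F t s) D := by
  have hF_deriv : ∀ t ∈ interior D,
      HasDerivAt (fun t => ∫ s in a..b, F t s) (∫ s in a..b, F' t s) t := fun t ht =>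
    hasDerivAt_intervalIntegral_of_continuousOn_prod (mem_interior_iff_mem_nhds.1 ht) hF hF' hderiv
  refine antitoneOn_of_deriv_nonpos hD (continuousOn_intervalIntegral_of_continuousOn_prod hDc hF)
    (fun t ht => (hF_deriv t ht).differentiableAt.differentiableWithinAt) fun t ht => ?_
  rw [(hF_deriv t ht).deriv]
  exact hnonpos t ht

end ParametricIntegral

theorem integral_mul_deriv_deriv_eq_neg_integral_deriv_sq {a b : ℝ} {u u' u'' : ℝ → ℝ}
    (hu : ∀ x ∈ [[a, b]], HasDerivWithinAt u (u' x) [[a, b]] x)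
    (hu' : ∀ x ∈ [[a, b]], HasDerivWithinAt u' (u'' x) [[a, b]] x)
    (hu'' : ContinuousOn u'' [[a, b]]) (ha : u' a = 0) (hb : u' b = 0) :
    ∫ x in a..b, u x * u'' x = -∫ x in a..b, u' x ^ 2 := by
  have hu'_cont : ContinuousOn u' [[a, b]] := fun x hx => (hu' x hx).continuousWithinAt
  rw [integral_mul_deriv_eq_deriv_mul_of_hasDerivWithinAt hu hu' hu'_cont.intervalIntegrable
    hu''.intervalIntegrable, ha, hb]
  simp [sq]

theorem quadratic_form_nonpos_of_abs_le {b beta e w d : ℝ} (hb : 0 ≤ b)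
    (hbeta : (b + 1) ^ 2 / 4 + b < beta) (hd : |d| ≤ |e|) :
    e * (-(beta * e) - w + b * d) + w * (-w + b * d) ≤ 0 := by
  have hed : e * d ≤ e ^ 2 := by
    calc e * d ≤ |e| * |d| := by rw [← abs_mul]; exact le_abs_self _
      _ ≤ |e| * |e| := by gcongr
      _ = e ^ 2 := by rw [← sq, sq_abs]
  have hwd : w * d ≤ |w| * |e| := by
    calc w * d ≤ |w| * |d| := by rw [← abs_mul]; exact le_abs_self _
      _ ≤ |w| * |e| := by gcongr
  have hew : -(e * w) ≤ |w| * |e| := by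
    rw [mul_comm, ← abs_mul]; exact neg_le_abs _
  -- completing the square in `|w|`: the form is at most `-(beta - b - (b + 1)² / 4) e²`
  nlinarith [sq_nonneg (|w| - (b + 1) / 2 * |e|), sq_abs e, sq_abs w, sq_nonneg e,
    mul_le_mul_of_nonneg_left hed hb, mul_le_mul_of_nonneg_left hwd hb]

theorem integral_cable_dissipation_nonpos {L lam b beta : ℝ} {e e' e'' w d p q : ℝ → ℝ}
    (hL : 0 ≤ L) (hb : 0 ≤ b) (hbeta : (b + 1) ^ 2 / 4 + b < beta)
    (he : ∀ s ∈ [[0, L]], HasDerivWithinAt e (e' s) [[0, L]] s)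
    (he' : ∀ s ∈ [[0, L]], HasDerivWithinAt e' (e'' s) [[0, L]] s)
    (he'' : ContinuousOn e'' [[0, L]]) (he'0 : e' 0 = 0) (he'L : e' L = 0)
    (hw : ContinuousOn w [[0, L]]) (hp : ContinuousOn p [[0, L]]) (hq : ContinuousOn q [[0, L]])
    (hp_eq : ∀ s ∈ [[0, L]], p s = lam ^ 2 * e'' s - beta * e s - w s + b * d s)
    (hq_eq : ∀ s ∈ [[0, L]], q s = -w s + b * d s)
    (hde : ∀ s ∈ [[0, L]], |d s| ≤ |e s|) :
    ∫ s in 0..L, (2 * e s * p s + 2 * w s * q s) ≤ 0 := by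
  have he_cont : ContinuousOn e [[0, L]] := fun s hs => (he s hs).continuousWithinAt
  calc ∫ s in 0..L, (2 * e s * p s + 2 * w s * q s)
      ≤ ∫ s in 0..L, 2 * lam ^ 2 * (e s * e'' s) := by
        refine integral_mono_on hL (ContinuousOn.intervalIntegrable (by fun_prop))
          (ContinuousOn.intervalIntegrable (by fun_prop)) fun s hs => ?_
        rw [← uIcc_of_le hL] at hs
        have := quadratic_form_nonpos_of_abs_le (w := w s) hb hbeta (hde s hs)
        rw [hp_eq s hs, hq_eq s hs]
        linarith
    _ = -(2 * lam ^ 2 * ∫ s in 0..L, e' s ^ 2) := by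
        rw [intervalIntegral.integral_const_mul,
          integral_mul_deriv_deriv_eq_neg_integral_deriv_sq he he' he'' he'0 he'L, mul_neg]
    _ ≤ 0 := neg_nonpos.2 <|
        mul_nonneg (by positivity) (integral_nonneg hL fun s _ => sq_nonneg _)

theorem lyapunov_functional_nonincreasing_general
    (L lam tau tautil b beta : ℝ)
    (hL : 0 < L)
    (hb : 0 ≤ b) (hbeta : (b + 1) ^ 2 / 4 + b < beta)
    (V W Vt Wt Vs Vss : ℝ → ℝ → ℝ)
    (Vbar Vbar' Vbar'' : ℝ → ℝ)
    -- the reference voltage is twice continuously differentiable with flat ends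
    (hVbar : ∀ s ∈ Icc 0 L, HasDerivWithinAt Vbar (Vbar' s) (Icc 0 L) s)
    (hVbar' : ∀ s ∈ Icc 0 L, HasDerivWithinAt Vbar' (Vbar'' s) (Icc 0 L) s)
    (hVbar''cont : ContinuousOn Vbar'' (Icc 0 L))
    (hVbar0 : Vbar' 0 = 0) (hVbarL : Vbar' L = 0)
    -- joint continuity of the solution and its partial derivatives
    (hVcont : ContinuousOn (fun p : ℝ × ℝ => V p.1 p.2) (Ici 0 ×ˢ Icc 0 L))
    (hWcont : ContinuousOn (fun p : ℝ × ℝ => W p.1 p.2) (Ici 0 ×ˢ Icc 0 L))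
    (hVtcont : ContinuousOn (fun p : ℝ × ℝ => Vt p.1 p.2) (Ici 0 ×ˢ Icc 0 L))
    (hWtcont : ContinuousOn (fun p : ℝ × ℝ => Wt p.1 p.2) (Ici 0 ×ˢ Icc 0 L))
    (hVsscont : ContinuousOn (fun p : ℝ × ℝ => Vss p.1 p.2) (Ici 0 ×ˢ Icc 0 L))
    -- partial derivatives
    (hVt : ∀ t ∈ Ici (0:ℝ), ∀ s ∈ Icc 0 L,
      HasDerivWithinAt (fun t' => V t' s) (Vt t s) (Ici 0) t)
    (hWt : ∀ t ∈ Ici (0:ℝ), ∀ s ∈ Icc 0 L,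
      HasDerivWithinAt (fun t' => W t' s) (Wt t s) (Ici 0) t)
    (hVs : ∀ t ∈ Ici (0:ℝ), ∀ s ∈ Icc 0 L,
      HasDerivWithinAt (fun s' => V t s') (Vs t s) (Icc 0 L) s)
    (hVss : ∀ t ∈ Ici (0:ℝ), ∀ s ∈ Icc 0 L,
      HasDerivWithinAt (fun s' => Vs t s') (Vss t s) (Icc 0 L) s)
    -- closed-loop cable dynamics with the reference tracking current control
    (hPDE_V : ∀ t ∈ Ici (0:ℝ), ∀ s ∈ Icc 0 L,
      tau * Vt t s = lam ^ 2 * Vss t s - V t s - W t s +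
        (b * max (V t s) 0 + (1 - beta) * V t s + beta * Vbar s
          - lam ^ 2 * Vbar'' s))
    (hPDE_W : ∀ t ∈ Ici (0:ℝ), ∀ s ∈ Icc 0 L,
      tautil * Wt t s = -W t s + b * max (V t s) 0)
    -- Neumann boundary conditions
    (hNeumann0 : ∀ t ∈ Ici (0:ℝ), Vs t 0 = 0)
    (hNeumannL : ∀ t ∈ Ici (0:ℝ), Vs t L = 0) :
    AntitoneOn
      (fun t => (1 / 2) * ∫ s in (0:ℝ)..L,
        (tau * (V t s - Vbar s) ^ 2 + tautil * (W t s - b * max (Vbar s) 0) ^ 2))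
      (Ici 0) := by
  simp only [← uIcc_of_le hL.le] at *
  have hVbar_cont : ContinuousOn Vbar [[0, L]] := fun s hs => (hVbar s hs).continuousWithinAt
  have hgVbar_cont : ContinuousOn (fun s => b * max (Vbar s) 0) [[0, L]] := by fun_prop
  have comp_snd : ∀ {f : ℝ → ℝ}, ContinuousOn f [[0, L]] →
      ContinuousOn (fun p : ℝ × ℝ => f p.2) (Ici 0 ×ˢ [[0, L]]) := fun hf =>
    hf.comp continuousOn_snd fun _ hp => hp.2
  have he_prod := hVcont.sub (comp_snd hVbar_cont)
  have hw_prod := hWcont.sub (comp_snd hgVbar_cont)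
  refine fun t₁ ht₁ t₂ ht₂ hle => mul_le_mul_of_nonneg_left
    (antitoneOn_intervalIntegral_of_integral_deriv_nonpos
      (F := fun t s => tau * (V t s - Vbar s) ^ 2 + tautil * (W t s - b * max (Vbar s) 0) ^ 2)
      (F' := fun t s => 2 * (V t s - Vbar s) * (tau * Vt t s)
        + 2 * (W t s - b * max (Vbar s) 0) * (tautil * Wt t s))
      (convex_Ici 0) isClosed_Ici ?_ ?_ (fun t ht s hs => ?deriv) (fun t ht => ?dissipation)
      ht₁ ht₂ hle) (by norm_num)
  · exact (continuousOn_const.mul (he_prod.pow 2)).add (continuousOn_const.mul (hw_prod.pow 2))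
  · exact ((continuousOn_const.mul he_prod).mul (continuousOn_const.mul hVtcont)).add
      ((continuousOn_const.mul hw_prod).mul (continuousOn_const.mul hWtcont))
  case deriv =>
    exact ((((hVt t ht s hs).sub_const _).fun_pow 2).const_mul tau).add
      ((((hWt t ht s hs).sub_const _).fun_pow 2).const_mul tautil) |>.congr_deriv (by ring)
  case dissipation =>
    replace ht := interior_subset ht
    exact integral_cable_dissipation_nonpos hL.le hb hbeta
      (fun s hs => (hVs t ht s hs).sub (hVbar s hs))
      (fun s hs => (hVss t ht s hs).sub (hVbar' s hs))
      ((hVsscont.uncurry_left t ht).sub hVbar''cont)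
      (by rw [hNeumann0 t ht, hVbar0, sub_zero]) (by rw [hNeumannL t ht, hVbarL, sub_zero])
      ((hWcont.uncurry_left t ht).sub hgVbar_cont)
      (continuousOn_const.mul (hVtcont.uncurry_left t ht))
      (continuousOn_const.mul (hWtcont.uncurry_left t ht))
      (fun s hs => by rw [hPDE_V t ht s hs]; ring) (fun s hs => by rw [hPDE_W t ht s hs]; ring)
      fun s _ => abs_max_sub_max_le_abs _ _ _

/-- Asymptotic-stability part of the Appendix lemma for reference tracking control:
for the closed-loop cable dynamics
`τ ∂V/∂t = λ² ∂²V/∂s² − V − W + I`, `τ̃ ∂W/∂t = −W + b g(V)` with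
`I = b g(V) + (1−β) V + β V̄ − λ² V̄''` and Neumann boundary conditions, if
`b ≥ 0`, `τ, τ̃, λ > 0` and `β > (b+1)²/4 + b`, the Lyapunov functional
`𝓛₀(t) = ½ ∫₀ᴸ τ (V − V̄)² + τ̃ (W − b g(V̄))² ds` is nonincreasing on `[0, ∞)`. -/
theorem lyapunov_functional_nonincreasing
    (L lam tau tautil b beta : ℝ)
    (hL : 0 < L) (hlam : 0 < lam) (htau : 0 < tau) (htautil : 0 < tautil)
    (hb : 0 ≤ b) (hbeta : (b + 1) ^ 2 / 4 + b < beta)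
    (V W Vt Wt Vs Vss : ℝ → ℝ → ℝ)
    (Vbar Vbar' Vbar'' : ℝ → ℝ)
    -- the reference voltage is twice continuously differentiable with flat ends
    (hVbar : ∀ s ∈ Icc 0 L, HasDerivWithinAt Vbar (Vbar' s) (Icc 0 L) s)
    (hVbar' : ∀ s ∈ Icc 0 L, HasDerivWithinAt Vbar' (Vbar'' s) (Icc 0 L) s)
    (hVbar''cont : ContinuousOn Vbar'' (Icc 0 L))
    (hVbar0 : Vbar' 0 = 0) (hVbarL : Vbar' L = 0)
    -- joint continuity of the solution and its partial derivatives
    (hVcont : ContinuousOn (fun p : ℝ × ℝ => V p.1 p.2) (Ici 0 ×ˢ Icc 0 L))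
    (hWcont : ContinuousOn (fun p : ℝ × ℝ => W p.1 p.2) (Ici 0 ×ˢ Icc 0 L))
    (hVtcont : ContinuousOn (fun p : ℝ × ℝ => Vt p.1 p.2) (Ici 0 ×ˢ Icc 0 L))
    (hWtcont : ContinuousOn (fun p : ℝ × ℝ => Wt p.1 p.2) (Ici 0 ×ˢ Icc 0 L))
    (hVscont : ContinuousOn (fun p : ℝ × ℝ => Vs p.1 p.2) (Ici 0 ×ˢ Icc 0 L))
    (hVsscont : ContinuousOn (fun p : ℝ × ℝ => Vss p.1 p.2) (Ici 0 ×ˢ Icc 0 L))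
    -- partial derivatives
    (hVt : ∀ t ∈ Ici (0:ℝ), ∀ s ∈ Icc 0 L,
      HasDerivWithinAt (fun t' => V t' s) (Vt t s) (Ici 0) t)
    (hWt : ∀ t ∈ Ici (0:ℝ), ∀ s ∈ Icc 0 L,
      HasDerivWithinAt (fun t' => W t' s) (Wt t s) (Ici 0) t)
    (hVs : ∀ t ∈ Ici (0:ℝ), ∀ s ∈ Icc 0 L,
      HasDerivWithinAt (fun s' => V t s') (Vs t s) (Icc 0 L) s)
    (hVss : ∀ t ∈ Ici (0:ℝ), ∀ s ∈ Icc 0 L,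
      HasDerivWithinAt (fun s' => Vs t s') (Vss t s) (Icc 0 L) s)
    -- closed-loop cable dynamics with the reference tracking current control
    (hPDE_V : ∀ t ∈ Ici (0:ℝ), ∀ s ∈ Icc 0 L,
      tau * Vt t s = lam ^ 2 * Vss t s - V t s - W t s +
        (b * max (V t s) 0 + (1 - beta) * V t s + beta * Vbar s
          - lam ^ 2 * Vbar'' s))
    (hPDE_W : ∀ t ∈ Ici (0:ℝ), ∀ s ∈ Icc 0 L,
      tautil * Wt t s = -W t s + b * max (V t s) 0)
    -- Neumann boundary conditions
    (hNeumann0 : ∀ t ∈ Ici (0:ℝ), Vs t 0 = 0)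
    (hNeumannL : ∀ t ∈ Ici (0:ℝ), Vs t L = 0) :
    AntitoneOn
      (fun t => (1 / 2) * ∫ s in (0:ℝ)..L,
        (tau * (V t s - Vbar s) ^ 2 + tautil * (W t s - b * max (Vbar s) 0) ^ 2))
      (Ici 0) :=
  lyapunov_functional_nonincreasing_general L lam tau tautil b beta hL hb hbeta V W Vt Wt Vs Vss
    Vbar Vbar' Vbar'' hVbar hVbar' hVbar''cont hVbar0 hVbarL hVcont hWcont hVtcont hWtcont hVsscont
    hVt hWt hVs hVss hPDE_V hPDE_W hNeumann0 hNeumannL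
end
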